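/- arXiv:2512.23574 — 5 statements merged into one kernel-verified Lean document; each statement's English description precedes it below -/
import Mathlib

section
/- Let A be a finite set of integers and let h ≥ 2. Define A_q = A ∪ {r ∈ ℤ : |r| ≥ q} for q ≥ 1. Then A = ⋂_{q≥1} A_q, and hA ≠ ⋂_{q≥1} hA_q; in fact ⋂_{q≥1} hA_q = ℤ while hA is finite. -/
/-- Sum of a nonempty tuple in an additive semigroup. -/
def finSum {S : Type*} [Add S] : ∀ {n : ℕ}, (Fin (n + 1) → S) → S
  | 0, f => f 0
  | n + 1, f => finSum (fun i => f i.castSucc) + f (Fin.last (n + 1))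

/-- The `h`-fold sumset of `A`: all sums of `h` not necessarily distinct elements of `A`. -/
def sumset {S : Type*} [Add S] (A : Set S) : ℕ → Set S
  | 0 => ∅
  | n + 1 => {x | ∃ f : Fin (n + 1) → S, (∀ i, f i ∈ A) ∧ finSum f = x}

lemma finSum_eq_sum {n : ℕ} (f : Fin (n + 1) → ℤ) : finSum f = ∑ i, f i := by
  induction n with
  | zero => simp [finSum]
  | succ n ih => rw [finSum, ih, ← Fin.sum_univ_castSucc (f := f)]

lemma sumset_one (A : Set ℤ) : sumset A 1 = A := by
  ext x
  constructor
  · rintro ⟨f, hf, rfl⟩; exact hf 0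
  · intro hx; exact ⟨fun _ => x, fun _ => hx, rfl⟩

lemma sumset_finite (A : Set ℤ) (hA : A.Finite) : ∀ h, (sumset A h).Finite
  | 0 => Set.finite_empty
  | 1 => by rw [sumset_one]; exact hA
  | (n + 2) => by
    have ih := sumset_finite A hA (n + 1)
    apply (ih.add hA).subset
    rintro x ⟨f, hf, rfl⟩
    exact ⟨finSum (fun i => f i.castSucc), ⟨_, fun i => hf _, rfl⟩,
      f (Fin.last (n + 1)), hf _, rfl⟩

theorem stmt2 (A : Set ℤ) (hAfin : A.Finite) (h : ℕ) (hh : 2 ≤ h)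
    (Aq : ℕ → Set ℤ) (hAq : ∀ q, Aq q = A ∪ {r : ℤ | (q : ℤ) ≤ |r|}) :
    A = ⋂ q, ⋂ (_ : 1 ≤ q), Aq q ∧
      (⋂ q, ⋂ (_ : 1 ≤ q), sumset (Aq q) h) = Set.univ ∧
      (sumset A h).Finite ∧
      sumset A h ≠ ⋂ q, ⋂ (_ : 1 ≤ q), sumset (Aq q) h := by
  have hfin : (sumset A h).Finite := sumset_finite A hAfin h
  have huniv : (⋂ q, ⋂ (_ : 1 ≤ q), sumset (Aq q) h) = Set.univ := by
    ext x
    simp only [Set.mem_iInter, Set.mem_univ, iff_true]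
    intro q hq
    obtain ⟨m, rfl⟩ : ∃ m, h = m + 1 := ⟨h - 1, by omega⟩
    set c : ℤ := (q : ℤ) + |x| with hc
    refine ⟨fun i => -c + (if i = Fin.last m then x + (m + 1) * c else 0), ?_, ?_⟩
    · intro i
      rw [hAq]
      right
      simp only [Set.mem_setOf_eq]
      rcases eq_or_ne i (Fin.last m) with rfl | hi
      · simp only [if_pos rfl]
        have h1 : (1 : ℤ) ≤ m := by exact_mod_cast (by omega : 1 ≤ m)
        have hx := abs_nonneg x
        have : (q : ℤ) ≤ -c + (x + (m + 1) * c) := by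
          have : (m : ℤ) * c ≥ 1 * c := by
            apply mul_le_mul_of_nonneg_right h1
            positivity
          nlinarith [neg_abs_le x]
        calc (q : ℤ) ≤ -c + (x + (m + 1) * c) := this
          _ ≤ |_| := le_abs_self _
      · simp only [if_neg hi, add_zero, abs_neg]
        have : (q : ℤ) ≤ c := by
          have := abs_nonneg x; omega
        calc (q : ℤ) ≤ c := this
          _ ≤ |c| := le_abs_self _
    · rw [finSum_eq_sum]
      rw [Finset.sum_add_distrib, Finset.sum_const, Finset.sum_ite_eq' Finset.univ (Fin.last m)]
      simp only [Finset.mem_univ, if_pos, Finset.card_univ, Fintype.card_fin]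
      ring
  refine ⟨?_, huniv, hfin, ?_⟩
  · ext x
    simp only [Set.mem_iInter]
    constructor
    · intro hx q hq
      rw [hAq]; exact Or.inl hx
    · intro hx
      have := hx (x.natAbs + 1) (by omega)
      rw [hAq] at this
      rcases this with h | h
      · exact h
      · simp only [Set.mem_setOf_eq] at h
        push_cast at h
        omega
  · rw [huniv]
    intro heq
    exact Set.infinite_univ (heq ▸ hfin)
end

section
/- Let h be a positive integer and S an additive abelian semigroup such that for every x ∈ S the number of h-tuples (b_1,...,b_h) ∈ S^h with b_1 + ... + b_h = x is finite. If (A_q)_{q≥1} is a decreasing sequence of subsets of S with A = ⋂_q A_q, then hA = ⋂_q hA_q. -/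
theorem stmt3 {S : Type*} [AddCommSemigroup S] (h : ℕ)
    (hfin : ∀ x : S, {f : Fin (h + 1) → S | finSum f = x}.Finite)
    (A : Set S) (Aq : ℕ → Set S)
    (hdec : ∀ q, Aq (q + 1) ⊆ Aq q) (hA : A = ⋂ q, Aq q) :
    sumset A (h + 1) = ⋂ q, sumset (Aq q) (h + 1) := by
  have hanti : ∀ {q q' : ℕ}, q ≤ q' → Aq q' ⊆ Aq q := fun {q q'} hle =>
    antitone_nat_of_succ_le hdec hle
  ext x
  simp only [Set.mem_iInter]
  constructor
  · rintro ⟨f, hf, hfx⟩ q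
    exact ⟨f, fun i => (hA ▸ hf i : f i ∈ ⋂ q, Aq q) |> (Set.mem_iInter.mp · q), hfx⟩
  · intro hx
    -- choose witnesses
    have hch : ∀ q : ℕ, ∃ f : Fin (h + 1) → S, (∀ i, f i ∈ Aq q) ∧ finSum f = x := hx
    choose g hg1 hg2 using hch
    -- g maps into the finite set of tuples summing to x
    have : Finite {f : Fin (h + 1) → S | finSum f = x} := (hfin x).to_subtype
    set g' : ℕ → {f : Fin (h + 1) → S | finSum f = x} := fun q => ⟨g q, hg2 q⟩ with hg'
    obtain ⟨t, ht⟩ := Finite.exists_infinite_fiber g'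
    have htinf : {q | g' q = t}.Infinite := by
      rw [Set.infinite_coe_iff] at ht
      exact ht
    refine ⟨t.1, fun i => ?_, t.2⟩
    rw [hA, Set.mem_iInter]
    intro q
    obtain ⟨q', hq'mem, hq'gt⟩ := htinf.exists_gt q
    have : g q' = t.1 := congrArg Subtype.val hq'mem
    exact hanti hq'gt.le (this ▸ hg1 q' i)
end

section
/- Let (A_q)_{q≥1} be a decreasing sequence of subsets of ℕ₀ (nonnegative integers) with A = ⋂_q A_q. Then for every positive integer h, the h-fold sumset satisfies hA = ⋂_q hA_q. -/
lemma le_finSum {n : ℕ} (f : Fin (n + 1) → ℕ) (i : Fin (n + 1)) : f i ≤ finSum f := by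
  induction n with
  | zero =>
    have : i = 0 := Fin.fin_one_eq_zero i
    simp [this, finSum]
  | succ n ih =>
    show f i ≤ finSum (fun j => f j.castSucc) + f (Fin.last (n + 1))
    induction i using Fin.lastCases with
    | last => exact Nat.le_add_left _ _
    | cast j => exact le_trans (ih (fun j => f j.castSucc) j) (Nat.le_add_right _ _)

lemma Aq_anti (Aq : ℕ → Set ℕ) (hdec : ∀ q, Aq (q + 1) ⊆ Aq q) :
    ∀ {q q'}, q ≤ q' → Aq q' ⊆ Aq q := by
  intro q q' hle
  induction hle with
  | refl => exact Set.Subset.refl _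
  | step _ ih => exact fun x hx => ih (hdec _ hx)

theorem stmt6 (A : Set ℕ) (Aq : ℕ → Set ℕ)
    (hdec : ∀ q, Aq (q + 1) ⊆ Aq q) (hA : A = ⋂ q, Aq q) (h : ℕ) (hh : 0 < h) :
    sumset A h = ⋂ q, sumset (Aq q) h := by
  subst hA
  obtain ⟨n, rfl⟩ : ∃ n, h = n + 1 := ⟨h - 1, (Nat.succ_pred_eq_of_pos hh).symm⟩
  ext x
  simp only [Set.mem_iInter]
  constructor
  · rintro ⟨f, hf, rfl⟩ q
    exact ⟨f, fun i => Set.mem_iInter.mp (hf i) q, rfl⟩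
  · intro hx
    choose f hf hsum using hx
    -- all entries are ≤ x
    have hle : ∀ q i, f q i ≤ x := fun q i => (hsum q) ▸ le_finSum (f q) i
    -- pigeonhole
    let F : ℕ → (Fin (n + 1) → Fin (x + 1)) := fun q i => ⟨f q i, Nat.lt_succ_of_le (hle q i)⟩
    obtain ⟨y, hy⟩ := Finite.exists_infinite_fiber F
    have hyinf : (F ⁻¹' {y}).Infinite := Set.infinite_coe_iff.mp hy
    obtain ⟨q0, hq0⟩ : ∃ q0, F q0 = y := by
      obtain ⟨q0, hq0⟩ := hyinf.nonempty
      exact ⟨q0, hq0⟩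
    refine ⟨f q0, fun i => Set.mem_iInter.mpr fun q => ?_, hsum q0⟩
    obtain ⟨q', hq', hlt⟩ := hyinf.exists_gt q
    have heq : f q' i = f q0 i := by
      have : F q' = F q0 := hq'.trans hq0.symm
      have := congrFun this i
      exact congrArg Fin.val this
    exact heq ▸ Aq_anti Aq hdec (le_of_lt hlt) (hf q' i)
end

section
/- Let A be an infinite set of integers with min(A) = a* < 0 such that ℤ \ A contains infinitely many positive integers. Define A_q = A ∪ {r ∈ ℤ : r ≥ q} for q ≥ 1. Then (A_q) is a decreasing sequence that is not eventually constant, A = ⋂_q A_q, and hA = ⋂_q hA_q for every positive integer h. -/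
theorem stmt12 (A : Set ℤ) (hAinf : A.Infinite) (a : ℤ) (haA : a ∈ A)
    (hmin : ∀ b ∈ A, a ≤ b) (hneg : a < 0)
    (hcoinf : {r : ℤ | 0 < r ∧ r ∉ A}.Infinite)
    (Aq : ℕ → Set ℤ) (hAq : ∀ q, Aq q = A ∪ {r : ℤ | (q : ℤ) ≤ r}) :
    (∀ q, Aq (q + 1) ⊆ Aq q) ∧
      {q : ℕ | Aq q ≠ Aq (q + 1)}.Infinite ∧
      A = ⋂ q, Aq q ∧
      ∀ h : ℕ, 0 < h → sumset A h = ⋂ q, sumset (Aq q) h := by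
  refine ⟨?_, ?_, ?_, ?_⟩
  · intro q x hx
    rw [hAq] at hx ⊢
    rcases hx with hx | hx
    · exact Or.inl hx
    · refine Or.inr ?_
      simp only [Set.mem_setOf_eq] at hx ⊢
      push_cast at hx ⊢
      linarith
  · have himg : (Int.toNat '' {r : ℤ | 0 < r ∧ r ∉ A}).Infinite := by
      apply hcoinf.image
      intro x hx y hy hxy
      have := congrArg (Int.ofNat) hxy
      simpa [Int.toNat_of_nonneg hx.1.le, Int.toNat_of_nonneg hy.1.le] using this
    apply himg.mono
    rintro q ⟨r, ⟨hr, hrA⟩, rfl⟩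
    have hq : ((r.toNat : ℤ)) = r := Int.toNat_of_nonneg hr.le
    intro heq
    have h1 : r ∈ Aq r.toNat := by
      rw [hAq]; right; simp [hq]
    have h2 : r ∉ Aq (r.toNat + 1) := by
      rw [hAq]
      rintro (h | h)
      · exact hrA h
      · simp only [Set.mem_setOf_eq] at h
        push_cast [hq] at h
        linarith
    exact h2 (heq ▸ h1)
  · ext x
    constructor
    · intro hx
      refine Set.mem_iInter.2 fun q => ?_
      rw [hAq]; exact Or.inl hx
    · intro hx
      have := Set.mem_iInter.1 hx (x + 1).toNat
      rw [hAq] at this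
      rcases this with h | h
      · exact h
      · exfalso
        simp only [Set.mem_setOf_eq] at h
        have : (x + 1 : ℤ) ≤ ((x + 1).toNat : ℤ) := Int.self_le_toNat _
        linarith
  · intro h hh
    obtain ⟨n, rfl⟩ : ∃ n, h = n + 1 := ⟨h - 1, (Nat.succ_pred_eq_of_pos hh).symm⟩
    ext x
    constructor
    · intro hx
      refine Set.mem_iInter.2 fun q => ?_
      obtain ⟨f, hf, hsum⟩ := hx
      exact ⟨f, fun i => by rw [hAq]; exact Or.inl (hf i), hsum⟩
    · intro hx
      set q : ℕ := (x - n * a + 1).toNat with hqdef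
      have hq : (x - n * a + 1 : ℤ) ≤ (q : ℤ) := Int.self_le_toNat _
      obtain ⟨f, hf, hsum⟩ := Set.mem_iInter.1 hx q
      by_cases hall : ∀ i, f i ∈ A
      · exact ⟨f, hall, hsum⟩
      · exfalso
        push_neg at hall
        obtain ⟨i, hi⟩ := hall
        have hfiq : (q : ℤ) ≤ f i := by
          have := hf i
          rw [hAq] at this
          rcases this with h | h
          · exact absurd h hi
          · exact h
        have hlb : ∀ j, a ≤ f j := by
          intro j
          have := hf j
          rw [hAq] at this
          rcases this with h | h
          · exact hmin _ h
          · have : (q : ℤ) ≤ f j := h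
            have h0 : (0 : ℤ) ≤ (q : ℤ) := Int.natCast_nonneg _
            linarith
        have hxsum : x = ∑ j, f j := by rw [← finSum_eq_sum, hsum]
        have hsplit : ∑ j, f j = f i + ∑ j ∈ Finset.univ.erase i, f j :=
          (Finset.add_sum_erase _ f (Finset.mem_univ i)).symm
        have hcard : (Finset.univ.erase i).card = n := by
          rw [Finset.card_erase_of_mem (Finset.mem_univ i)]
          simp
        have hrest : (n : ℤ) * a ≤ ∑ j ∈ Finset.univ.erase i, f j := by
          calc (n : ℤ) * a = (Finset.univ.erase i).card • a := by rw [hcard]; simp [nsmul_eq_mul]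
            _ ≤ ∑ j ∈ Finset.univ.erase i, f j :=
              Finset.card_nsmul_le_sum _ _ _ (fun j _ => hlb j)
        have : x ≥ (q : ℤ) + n * a := by
          rw [hxsum, hsplit]; exact add_le_add hfiq hrest
        linarith
end

section
/- Let G be a locally compact Hausdorff abelian topological group, let (A_q)_{q≥1} be a decreasing sequence of compact subsets of G, and let A = ⋂_q A_q be nonempty. Then for every positive integer h, hA = ⋂_q hA_q. -/
/-! Every representation `x = a₁ + ⋯ + aₕ` with `aᵢ ∈ A_q` is a point of the compact set
`A_qʰ ∩ Σ⁻¹(x)`; these sets decrease in `q`, so by Cantor's intersection theorem they have a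
common point, which is a representation of `x` by elements of `A = ⋂ A_q`. -/

open Set

theorem continuous_finSum {S : Type*} [Add S] [TopologicalSpace S] [ContinuousAdd S] :
    ∀ n : ℕ, Continuous (finSum : (Fin (n + 1) → S) → S)
  | 0 => continuous_apply 0
  | n + 1 => ((continuous_finSum n).comp (continuous_pi fun i => continuous_apply i.castSucc)).add
      (continuous_apply _)

theorem sumset_succ_eq_image {S : Type*} [Add S] (A : Set S) (n : ℕ) :
    sumset A (n + 1) = finSum '' univ.pi fun _ : Fin (n + 1) => A := by
  ext x
  simp [sumset]

theorem iInter_univ_pi_const {ι α : Type*} (s : ι → Set α) (κ : Type*) :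
    (⋂ i, univ.pi fun _ : κ => s i) = univ.pi fun _ => ⋂ i, s i := by
  ext f
  simp only [mem_iInter, mem_univ_pi]
  exact forall_comm

theorem Continuous.image_iInter_of_directed_isCompact {X Y ι : Type*} [TopologicalSpace X]
    [TopologicalSpace Y] [T2Space X] [T1Space Y] [Nonempty ι] {f : X → Y} (hf : Continuous f)
    {K : ι → Set X} (hd : Directed (· ⊇ ·) K) (hc : ∀ i, IsCompact (K i)) :
    f '' ⋂ i, K i = ⋂ i, f '' K i := by
  refine (image_iInter_subset K f).antisymm fun y hy => ?_
  have hfiber : ∀ i, IsCompact (K i ∩ f ⁻¹' {y}) := fun i =>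
    (hc i).inter_right (isClosed_singleton.preimage hf)
  have hfiber_directed : Directed (· ⊇ ·) fun i => K i ∩ f ⁻¹' {y} :=
    fun i j => (hd i j).imp fun _ hk =>
      ⟨inter_subset_inter_left _ hk.1, inter_subset_inter_left _ hk.2⟩
  obtain ⟨x, hx⟩ := IsCompact.nonempty_iInter_of_directed_nonempty_isCompact_isClosed _
    hfiber_directed (fun i => mem_iInter.mp hy i) hfiber fun i => (hfiber i).isClosed
  simp only [mem_iInter, mem_inter_iff, mem_preimage, mem_singleton_iff] at hx
  exact ⟨x, mem_iInter.mpr fun i => (hx i).1, (hx (Classical.arbitrary ι)).2⟩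

theorem stmt16_general {G : Type*} [AddCommGroup G] [TopologicalSpace G]
    [IsTopologicalAddGroup G] [T2Space G]
    (Aq : ℕ → Set G) (hcomp : ∀ q, IsCompact (Aq q))
    (hdec : ∀ q, Aq (q + 1) ⊆ Aq q)
    (A : Set G) (hA : A = ⋂ q, Aq q)
    (h : ℕ) :
    sumset A h = ⋂ q, sumset (Aq q) h := by
  subst hA
  cases h with
  | zero => exact (iInter_const ∅).symm
  | succ n =>
    have hpow_antitone : Antitone fun q => univ.pi fun _ : Fin (n + 1) => Aq q :=
      antitone_nat_of_succ_le fun q => pi_mono fun _ _ => hdec q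
    simp only [sumset_succ_eq_image, ← iInter_univ_pi_const]
    exact (continuous_finSum n).image_iInter_of_directed_isCompact hpow_antitone.directed_ge
      fun q => isCompact_univ_pi fun _ => hcomp q

theorem stmt16 {G : Type*} [AddCommGroup G] [TopologicalSpace G]
    [IsTopologicalAddGroup G] [T2Space G] [LocallyCompactSpace G]
    (Aq : ℕ → Set G) (hcomp : ∀ q, IsCompact (Aq q))
    (hdec : ∀ q, Aq (q + 1) ⊆ Aq q)
    (A : Set G) (hA : A = ⋂ q, Aq q) (hne : A.Nonempty)
    (h : ℕ) (hh : 0 < h) :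
    sumset A h = ⋂ q, sumset (Aq q) h :=
  stmt16_general Aq hcomp hdec A hA h
end
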